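/- arXiv:1908.04056 — 2 statements merged into one kernel-verified Lean document; each statement's English description precedes it below -/
import Mathlib

section
/- Every nonempty word w over A has exactly one Nyldon factorization: there exists a unique sequence (n_1, n_2, …, n_k) of Nyldon words with n_1 ≤_lex n_2 ≤_lex ⋯ ≤_lex n_k and w = n_1 n_2 ⋯ n_k. -/
/-!
Common definitions: words over a totally ordered alphabet, lexicographic order,
Nyldon and Lyndon words, Nyldon-like sets, right Hall sets, and (circular) codes.
-/

/-- Strict lexicographic order on words: `u <_lex v` iff `u` is a proper prefix of `v`,
or `u` and `v` first differ at a position where `u` has the smaller letter. -/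
def LexLt {A : Type*} [LinearOrder A] (u v : List A) : Prop :=
  List.Lex (· < ·) u v

/-- Nonstrict lexicographic order on words. -/
def LexLe {A : Type*} [LinearOrder A] (u v : List A) : Prop :=
  u = v ∨ LexLt u v

theorem length_le_length_flatten_of_ne_nil {A : Type*} {s : List (List A)}
    (h : ∀ g ∈ s, g ≠ []) : s.length ≤ s.flatten.length := by
  induction s with
  | nil => simp
  | cons a t ih =>
    simp only [List.flatten_cons, List.length_append, List.length_cons]
    have ha : 1 ≤ a.length := List.length_pos_iff.mpr (h a (by simp))
    have ht := ih (fun g hg => h g (List.mem_cons_of_mem _ hg))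
    omega

theorem length_lt_length_flatten {A : Type*} {f : List A} {fs : List (List A)}
    (h2 : 2 ≤ fs.length) (hne : ∀ g ∈ fs, g ≠ []) (hf : f ∈ fs) :
    f.length < fs.flatten.length := by
  obtain ⟨s, t, rfl⟩ := List.append_of_mem hf
  have hs : s.length ≤ s.flatten.length :=
    length_le_length_flatten_of_ne_nil (fun g hg => hne g (by simp [hg]))
  have ht : t.length ≤ t.flatten.length :=
    length_le_length_flatten_of_ne_nil (fun g hg => hne g (by simp [hg]))
  have hlen : 2 ≤ s.length + t.length + 1 := by
    simp only [List.length_append, List.length_cons] at h2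
    omega
  have hj : (s ++ f :: t).flatten.length
      = s.flatten.length + f.length + t.flatten.length := by
    simp [List.flatten_append]
    omega
  omega

/-- A nonempty word is Nyldon if it admits no factorization into at least two
lexicographically nondecreasing Nyldon words. (Single letters are Nyldon vacuously,
since they admit no factorization into at least two nonempty words at all.) -/
def IsNyldon {A : Type*} [LinearOrder A] (w : List A) : Prop :=
  w ≠ [] ∧ ∀ fs : List (List A), 2 ≤ fs.length → (∀ g ∈ fs, g ≠ []) →
    fs.flatten = w → (∀ f ∈ fs, IsNyldon f) → fs.Chain' LexLe → False
termination_by w.length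
decreasing_by
  rename_i h2 hne hjoin hf
  subst hjoin
  exact length_lt_length_flatten h2 hne hf

/-- A nonempty word is Lyndon if it admits no factorization into at least two
lexicographically nonincreasing Lyndon words. -/
def IsLyndon {A : Type*} [LinearOrder A] (w : List A) : Prop :=
  w ≠ [] ∧ ∀ fs : List (List A), 2 ≤ fs.length → (∀ g ∈ fs, g ≠ []) →
    fs.flatten = w → (∀ f ∈ fs, IsLyndon f) →
    fs.Chain' (fun u v => LexLe v u) → False
termination_by w.length
decreasing_by
  rename_i h2 hne hjoin hf
  subst hjoin
  exact length_lt_length_flatten h2 hne hf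

/-- `fs` is a Nyldon factorization of `w`: a nondecreasing (under `≤_lex`) sequence
of Nyldon words whose concatenation is `w`. -/
def IsNyldonFactorization {A : Type*} [LinearOrder A] (fs : List (List A)) (w : List A) :
    Prop :=
  (∀ f ∈ fs, IsNyldon f) ∧ fs.Chain' LexLe ∧ fs.flatten = w

/-- The `j`-th power `u^j` of a word `u`: the concatenation of `j` copies of `u`. -/
def wordPow {A : Type*} (u : List A) (j : ℕ) : List A :=
  (List.replicate j u).flatten

/-- A word is primitive if it is not a power `u^j` of a word `u` with `j ≥ 2`. -/
def Primitive {A : Type*} (w : List A) : Prop :=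
  ∀ (u : List A) (j : ℕ), 2 ≤ j → w ≠ wordPow u j

/-- A Nyldon-like set over the alphabet `A`: a set `Mem` of nonempty words together with a
strict total order `lt` on it, such that every single letter is in the set, a word of length
at least `2` is in the set iff it admits no factorization into at least two nondecreasing
words of the set, and `f ≺ fg` whenever `f`, `g`, `fg` are all in the set. -/
structure NyldonLike (A : Type*) where
  /-- membership in `G` -/
  Mem : List A → Prop
  /-- the strict total order `≺` on `G` -/
  lt : List A → List A → Prop
  mem_ne_nil : ∀ w, Mem w → w ≠ []
  lt_irrefl : ∀ u, Mem u → ¬ lt u u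
  lt_trans : ∀ u v x, Mem u → Mem v → Mem x → lt u v → lt v x → lt u x
  lt_total : ∀ u v, Mem u → Mem v → lt u v ∨ u = v ∨ lt v u
  singleton_mem : ∀ a : A, Mem [a]
  mem_iff : ∀ w : List A, 2 ≤ w.length →
    (Mem w ↔ ¬ ∃ fs : List (List A), 2 ≤ fs.length ∧ (∀ f ∈ fs, Mem f) ∧
      fs.Chain' (fun u v => u = v ∨ lt u v) ∧ fs.flatten = w)
  append_lt : ∀ f g, Mem f → Mem g → Mem (f ++ g) → lt f (f ++ g)

namespace NyldonLike

variable {A : Type*}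

/-- The nonstrict order `⪯` associated to a Nyldon-like set. -/
def le (G : NyldonLike A) (u v : List A) : Prop :=
  u = v ∨ G.lt u v

/-- `fs` is a `G`-factorization of `w`: a nondecreasing (under `⪯`) sequence of
`G`-words whose concatenation is `w`. -/
def IsFactorization (G : NyldonLike A) (fs : List (List A)) (w : List A) : Prop :=
  (∀ f ∈ fs, G.Mem f) ∧ fs.Chain' G.le ∧ fs.flatten = w

end NyldonLike

/-- A factorization `fs` of a word written as the concatenation of `blocks` preserves the
blocks if each factor is the concatenation of a (nonempty) consecutive run of whole blocks. -/
def PreservesBlocks {A : Type*} (blocks fs : List (List A)) : Prop :=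
  ∃ P : List (List (List A)), (∀ p ∈ P, p ≠ []) ∧ P.flatten = blocks ∧
    P.map List.flatten = fs

/-- A right Hall set over the alphabet `A`: a set `Mem` of nonempty words with a strict
total order `lt` such that every nonempty word has a unique nondecreasing factorization
into words of the set, and `fg ≻ g` whenever `f`, `g`, `fg` are all in the set. -/
structure RightHallSet (A : Type*) where
  /-- membership in `H` -/
  Mem : List A → Prop
  /-- the strict total order `≺` on `H` -/
  lt : List A → List A → Prop
  mem_ne_nil : ∀ w, Mem w → w ≠ []
  lt_irrefl : ∀ u, Mem u → ¬ lt u u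
  lt_trans : ∀ u v x, Mem u → Mem v → Mem x → lt u v → lt v x → lt u x
  lt_total : ∀ u v, Mem u → Mem v → lt u v ∨ u = v ∨ lt v u
  unique_factorization : ∀ w : List A, w ≠ [] →
    ∃! fs : List (List A), (∀ f ∈ fs, Mem f) ∧
      fs.Chain' (fun u v => u = v ∨ lt u v) ∧ fs.flatten = w
  append_gt : ∀ f g, Mem f → Mem g → Mem (f ++ g) → lt g (f ++ g)

/-- A set `F` of words is a code if any two sequences of words of `F` with equal
concatenations are equal. -/
def IsCode {A : Type*} (F : List A → Prop) : Prop :=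
  ∀ l₁ l₂ : List (List A), (∀ f ∈ l₁, F f) → (∀ f ∈ l₂, F f) →
    l₁.flatten = l₂.flatten → l₁ = l₂

/-- `w ∈ F*`: `w` is a concatenation of (zero or more) words of `F`. -/
def CodeStar {A : Type*} (F : List A → Prop) (w : List A) : Prop :=
  ∃ l : List (List A), (∀ f ∈ l, F f) ∧ l.flatten = w

/-- A set `F` of words is a circular code if it is a code and whenever
`uv ∈ F*` and `vu ∈ F*`, also `u ∈ F*` and `v ∈ F*`. -/
def IsCircularCode {A : Type*} (F : List A → Prop) : Prop :=
  IsCode F ∧ ∀ u v : List A, CodeStar F (u ++ v) → CodeStar F (v ++ u) → CodeStar F u ∧ CodeStar F v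

/-!
Two properties are proved together by induction on the length of a word `w`: every proper
Nyldon suffix of a Nyldon word `w` is lexicographically smaller than `w`, and the last factor
of any Nyldon factorization of `w` is a longest Nyldon suffix of `w`. The second follows from
the first for the factors of `w`. For the first, write `w = p u` with `u` a longest proper
Nyldon suffix; the second property for shorter words shows that `p` is Nyldon, so `u <_lex p`
(otherwise `(p, u)` would factor `w`), and then every proper Nyldon suffix is `≤_lex u <_lex w`.
Uniqueness follows by cancelling the common last factor of two factorizations.
-/

theorem exists_eq_append_flatten_of_isSuffix_flatten {B : Type*} {s : List B}
    {fs : List (List B)} (hs : s ≠ []) (h : s <:+ fs.flatten) :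
    ∃ xs b ys u, fs = xs ++ b :: ys ∧ u <:+ b ∧ u ≠ [] ∧ s = u ++ ys.flatten := by
  induction fs with
  | nil => exact absurd (List.suffix_nil.1 h) hs
  | cons a t ih =>
    obtain ⟨q, hq⟩ := h
    rw [List.flatten_cons, List.append_eq_append_iff] at hq
    rcases hq with ⟨u, rfl, rfl⟩ | ⟨c, rfl, hc⟩
    · rcases eq_or_ne u [] with rfl | hu
      · obtain ⟨xs, b, ys, u, rfl, hub, hu, hs'⟩ := ih (List.suffix_refl _)
        exact ⟨_ :: xs, b, ys, u, rfl, hub, hu, hs'⟩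
      · exact ⟨[], q ++ u, t, u, rfl, List.suffix_append _ _, hu, rfl⟩
    · obtain ⟨xs, b, ys, u, rfl, hub, hu, rfl⟩ := ih ⟨c, hc.symm⟩
      exact ⟨a :: xs, b, ys, u, rfl, hub, hu, rfl⟩

theorem eq_of_isSuffix_of_length_eq {B : Type*} {s t w : List B} (hs : s <:+ w) (ht : t <:+ w)
    (h : s.length = t.length) : s = t :=
  (List.suffix_of_suffix_length_le hs ht h.le).eq_of_length h

section Nyldon

variable {A : Type*} [LinearOrder A]

theorem lexLe_iff_le {u v : List A} : LexLe u v ↔ u ≤ v := by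
  rw [LexLe, LexLt, le_iff_eq_or_lt]
  rfl

theorem isNyldon_iff (w : List A) : IsNyldon w ↔ w ≠ [] ∧ ∀ fs : List (List A),
    2 ≤ fs.length → (∀ g ∈ fs, g ≠ []) → fs.flatten = w → (∀ f ∈ fs, IsNyldon f) →
    fs.IsChain LexLe → False := by
  rw [IsNyldon]
  exact Iff.rfl

theorem IsNyldon.ne_nil {w : List A} (hw : IsNyldon w) : w ≠ [] :=
  ((isNyldon_iff w).1 hw).1

theorem isNyldon_of_length_eq_one {w : List A} (h : w.length = 1) : IsNyldon w := by
  refine (isNyldon_iff w).2 ⟨by rintro rfl; simp at h, fun fs h2 hne hfs _ _ => ?_⟩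
  have := length_le_length_flatten_of_ne_nil hne
  rw [hfs, h] at this
  omega

namespace IsNyldonFactorization

variable {fs gs : List (List A)} {u v w : List A}

theorem ne_nil (h : IsNyldonFactorization fs w) (hw : w ≠ []) : fs ≠ [] := by
  rintro rfl
  exact hw h.2.2.symm

theorem eq_nil (h : IsNyldonFactorization fs []) : fs = [] :=
  List.eq_nil_iff_forall_not_mem.2 fun f hf =>
    (h.1 f hf).ne_nil (List.flatten_eq_nil_iff.1 h.2.2 f hf)

theorem append (hf : IsNyldonFactorization fs u) (hg : IsNyldonFactorization gs v)
    (h : ∀ x ∈ fs.getLast?, ∀ y ∈ gs.head?, x ≤ y) :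
    IsNyldonFactorization (fs ++ gs) (u ++ v) :=
  ⟨fun f hf' => (List.mem_append.1 hf').elim (hf.1 f) (hg.1 f),
    List.isChain_append.2 ⟨hf.2.1, hg.2.1, fun x hx y hy => lexLe_iff_le.2 (h x hx y hy)⟩,
    by rw [List.flatten_append, hf.2.2, hg.2.2]⟩

theorem of_append_left (h : IsNyldonFactorization (fs ++ gs) w) :
    IsNyldonFactorization fs fs.flatten :=
  ⟨fun f hf => h.1 f (List.mem_append_left _ hf),
    h.2.1.infix (List.prefix_append _ _).isInfix, rfl⟩

theorem of_append_right (h : IsNyldonFactorization (fs ++ gs) w) :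
    IsNyldonFactorization gs gs.flatten :=
  ⟨fun f hf => h.1 f (List.mem_append_right _ hf),
    h.2.1.infix (List.suffix_append _ _).isInfix, rfl⟩

theorem exists_eq_concat (h : IsNyldonFactorization fs w) (hw : w ≠ []) :
    ∃ fs' a, fs = fs' ++ [a] ∧ IsNyldonFactorization fs' fs'.flatten ∧ IsNyldon a ∧
      w = fs'.flatten ++ a := by
  obtain ⟨fs', a, rfl⟩ := (List.eq_nil_or_concat' fs).resolve_left (h.ne_nil hw)
  exact ⟨fs', a, rfl, h.of_append_left, h.1 a (by simp), by rw [← h.2.2, List.flatten_concat]⟩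

end IsNyldonFactorization

theorem IsNyldon.length_le_one {fs : List (List A)} {w : List A} (hw : IsNyldon w)
    (hfs : IsNyldonFactorization fs w) : fs.length ≤ 1 := by
  by_contra! h
  exact ((isNyldon_iff w).1 hw).2 fs h (fun g hg => (hfs.1 g hg).ne_nil) hfs.2.2 hfs.1 hfs.2.1

theorem IsNyldon.isNyldonFactorization_iff {fs : List (List A)} {w : List A} (hw : IsNyldon w) :
    IsNyldonFactorization fs w ↔ fs = [w] := by
  constructor
  · intro hfs
    match fs, hw.length_le_one hfs with
    | [], _ => exact absurd hfs.2.2.symm hw.ne_nil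
    | [f], _ => simpa using hfs.2.2
  · rintro rfl
    exact ⟨by simpa using hw, List.isChain_singleton _, by simp⟩

theorem exists_isNyldonFactorization (w : List A) : ∃ fs, IsNyldonFactorization fs w := by
  by_cases hN : IsNyldon w
  · exact ⟨[w], hN.isNyldonFactorization_iff.2 rfl⟩
  by_cases hw : w = []
  · exact ⟨[], by simp, List.isChain_nil, hw.symm⟩
  rw [isNyldon_iff] at hN
  push Not at hN
  obtain ⟨fs, -, -, hfs, hN, hchain, -⟩ := hN hw
  exact ⟨fs, hN, hchain, hfs⟩

def IsStandardFactorization (p u : List A) : Prop :=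
  p ≠ [] ∧ IsNyldon u ∧ ∀ s, IsNyldon s → s <:+ p ++ u → s ≠ p ++ u → s.length ≤ u.length

theorem exists_isStandardFactorization {w : List A} (hw : 2 ≤ w.length) :
    ∃ p u, w = p ++ u ∧ IsStandardFactorization p u := by
  classical
  have hex : ∃ k, 0 < k ∧ k < w.length ∧ IsNyldon (w.drop k) :=
    ⟨w.length - 1, by omega, by omega, isNyldon_of_length_eq_one (by simp; omega)⟩
  obtain ⟨hk0, hkw, hu⟩ := Nat.find_spec hex
  refine ⟨w.take (Nat.find hex), w.drop (Nat.find hex), (List.take_append_drop _ _).symm,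
    List.ne_nil_of_length_pos (by rw [List.length_take]; omega), hu, ?_⟩
  rw [List.take_append_drop]
  rintro s hs ⟨t, rfl⟩ hst
  have ht : t ≠ [] := by rintro rfl; exact hst rfl
  have hdrop : (t ++ s).drop t.length = s := List.drop_left
  have := Nat.find_min' hex ⟨List.length_pos_iff.2 ht,
    by simp [List.length_pos_iff.2 hs.ne_nil], by rwa [hdrop]⟩
  simp only [List.length_drop, List.length_append] at this ⊢
  omega

def ProperNyldonSuffixesLt (w : List A) : Prop :=
  IsNyldon w → ∀ s, IsNyldon s → s <:+ w → s ≠ w → s < w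

def LastNyldonFactorIsLongest (w : List A) : Prop :=
  ∀ fs b, IsNyldonFactorization (fs ++ [b]) w → ∀ s, IsNyldon s → s <:+ w → s.length ≤ b.length

theorem IsStandardFactorization.isNyldon_left {p u : List A} (hpu : IsStandardFactorization p u)
    (hw : IsNyldon (p ++ u))
    (hG : ∀ v : List A, v.length < (p ++ u).length → LastNyldonFactorIsLongest v) :
    IsNyldon p := by
  obtain ⟨hp, hu, hmax⟩ := hpu
  by_contra hpN
  obtain ⟨P, hP⟩ := exists_isNyldonFactorization p
  obtain ⟨ps, m, rfl, hps, hm, rfl⟩ := hP.exists_eq_concat hp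
  have hps_ne : ps ≠ [] := by rintro rfl; exact hpN (by simpa using hm)
  have hum : u < m := by
    by_contra! hmu
    have := hw.length_le_one (hP.append (hu.isNyldonFactorization_iff.2 rfl) (by simpa using hmu))
    simp at this
  obtain ⟨F, hF⟩ := exists_isNyldonFactorization (m ++ u)
  obtain ⟨zs, z, rfl, hzs, hz, hmu_eq⟩ := hF.exists_eq_concat (by simp [hu.ne_nil])
  have hmu_len : (m ++ u).length < (ps.flatten ++ m ++ u).length := by
    have := length_le_length_flatten_of_ne_nil fun g hg => (hps.1 g hg).ne_nil
    have := List.length_pos_iff.2 hps_ne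
    simp only [List.length_append]
    omega
  have hmu_suffix : m ++ u <:+ ps.flatten ++ m ++ u := by
    rw [List.append_assoc]; exact List.suffix_append _ _
  have hz_suffix : z <:+ m ++ u := hmu_eq ▸ List.suffix_append _ _
  -- `u` is a longest proper Nyldon suffix of `w`, and the last factor `z` of `m ++ u` is one too
  have hzu : z = u := by
    refine eq_of_isSuffix_of_length_eq hz_suffix (List.suffix_append _ _) (le_antisymm ?_ ?_)
    · refine hmax z hz (hz_suffix.trans hmu_suffix) fun h => ?_
      exact absurd (h ▸ hz_suffix.length_le) (not_le.2 hmu_len)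
    · exact hG _ hmu_len zs z hF u hu (List.suffix_append _ _)
  subst hzu
  have hzs_eq : zs = [m] :=
    hm.isNyldonFactorization_iff.1 (List.append_cancel_right hmu_eq.symm ▸ hzs)
  subst hzs_eq
  exact not_lt.2 (lexLe_iff_le.1 (List.isChain_pair.1 hF.2.1)) hum

theorem IsStandardFactorization.lt {p u : List A} (hpu : IsStandardFactorization p u)
    (hw : IsNyldon (p ++ u)) (hp : IsNyldon p) : u < p := by
  by_contra! hpu'
  have := hw.length_le_one ((hp.isNyldonFactorization_iff.2 rfl).append
    (hpu.2.1.isNyldonFactorization_iff.2 rfl) (by simpa using hpu'))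
  simp at this

theorem not_isNyldon_append_flatten {b u : List A} {ys : List (List A)}
    (hfac : IsNyldonFactorization (b :: ys) (b :: ys).flatten) (hys : ys ≠ [])
    (hb : ProperNyldonSuffixesLt b) (hu : u ≠ []) (hub : u <:+ b) :
    ¬ IsNyldon (u ++ ys.flatten) := by
  intro hs
  obtain ⟨c, ys, rfl⟩ := List.exists_cons_of_ne_nil hys
  obtain ⟨U, hU⟩ := exists_isNyldonFactorization u
  obtain ⟨us, r, rfl, -, hr, rfl⟩ := hU.exists_eq_concat hu
  have hbc : b ≤ c := lexLe_iff_le.1 (List.isChain_cons_cons.1 hfac.2.1).1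
  have hcr : c < r := by
    by_contra! hrc
    have := hs.length_le_one (hU.append (hfac.of_append_right (fs := [b])) (by simpa using hrc))
    simp at this
    omega
  have hrb : r <:+ b := (List.suffix_append _ _).trans hub
  have hrb' : r < b := hb (hfac.1 b (by simp)) r hr hrb (hbc.trans_lt hcr).ne'
  exact lt_irrefl r ((hrb'.trans_le hbc).trans hcr)

theorem properNyldonSuffixesLt_of_forall_length_lt {w : List A}
    (ih : ∀ v : List A, v.length < w.length →
      ProperNyldonSuffixesLt v ∧ LastNyldonFactorIsLongest v) :
    ProperNyldonSuffixesLt w := by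
  intro hw s hs hsw hne
  have h2 : 2 ≤ w.length := by
    have := lt_of_le_of_ne hsw.length_le (mt hsw.eq_of_length hne)
    have := List.length_pos_iff.2 hs.ne_nil
    omega
  obtain ⟨p, u, rfl, hpu⟩ := exists_isStandardFactorization h2
  have hp := hpu.isNyldon_left hw fun v hv => (ih v hv).2
  have hup : u < p ++ u := List.Lex.append_right _ _ (hpu.lt hw hp)
  have hsu : s <:+ u :=
    List.suffix_of_suffix_length_le hsw (List.suffix_append p u) (hpu.2.2 s hs hsw hne)
  rcases eq_or_ne s u with rfl | hsu'
  · exact hup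
  · have hulen : u.length < (p ++ u).length := by
      simp [List.length_pos_iff.2 hpu.1]
    exact ((ih u hulen).1 hpu.2.1 s hs hsu hsu').trans hup

theorem lastNyldonFactorIsLongest_of_forall_length_lt {w : List A}
    (ih : ∀ v : List A, v.length < w.length → ProperNyldonSuffixesLt v) :
    LastNyldonFactorIsLongest w := by
  intro fs b hfac s hs hsw
  by_contra! hbs
  rw [← hfac.2.2] at hsw
  obtain ⟨xs, c, ys, u, heq, huc, hu, rfl⟩ :=
    exists_eq_append_flatten_of_isSuffix_flatten hs.ne_nil hsw
  have hys : ys ≠ [] := by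
    rintro rfl
    obtain ⟨-, hbc⟩ := List.append_inj' heq rfl
    simp only [List.cons.injEq, and_true] at hbc
    subst hbc
    simp only [List.flatten_nil, List.append_nil] at hbs
    exact not_le.2 hbs huc.length_le
  rw [heq] at hfac
  have hclen : c.length < w.length := by
    rw [← hfac.2.2]
    refine length_lt_length_flatten ?_ (fun g hg => (hfac.1 g hg).ne_nil) (by simp)
    have := List.length_pos_iff.2 hys
    simp
    omega
  exact not_isNyldon_append_flatten hfac.of_append_right hys (ih c hclen) hu huc hs

theorem properNyldonSuffixesLt_and_lastNyldonFactorIsLongest (w : List A) :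
    ProperNyldonSuffixesLt w ∧ LastNyldonFactorIsLongest w :=
  have ih : ∀ v : List A, v.length < w.length →
      ProperNyldonSuffixesLt v ∧ LastNyldonFactorIsLongest v :=
    fun v _ => properNyldonSuffixesLt_and_lastNyldonFactorIsLongest v
  ⟨properNyldonSuffixesLt_of_forall_length_lt ih,
    lastNyldonFactorIsLongest_of_forall_length_lt fun v hv => (ih v hv).1⟩
termination_by w.length

theorem IsNyldonFactorization.length_le_of_isSuffix {fs : List (List A)} {b s w : List A}
    (h : IsNyldonFactorization (fs ++ [b]) w) (hs : IsNyldon s) (hsw : s <:+ w) :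
    s.length ≤ b.length :=
  (properNyldonSuffixesLt_and_lastNyldonFactorIsLongest w).2 fs b h s hs hsw

theorem IsNyldonFactorization.unique {fs gs : List (List A)} {w : List A}
    (hf : IsNyldonFactorization fs w) (hg : IsNyldonFactorization gs w) : fs = gs := by
  induction fs using List.reverseRecOn generalizing gs w with
  | nil => rw [← hf.2.2] at hg; exact hg.eq_nil.symm
  | append_singleton fs a ih =>
    have ha : IsNyldon a := hf.1 a (by simp)
    have hw : w = fs.flatten ++ a := by rw [← hf.2.2, List.flatten_concat]
    obtain ⟨gs, b, rfl, hgs, hb, hw'⟩ :=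
      hg.exists_eq_concat (by simp [hw, ha.ne_nil])
    have haw : a <:+ w := hw ▸ List.suffix_append _ _
    have hbw : b <:+ w := hw' ▸ List.suffix_append _ _
    have hab : a = b := eq_of_isSuffix_of_length_eq haw hbw
      (le_antisymm (hg.length_le_of_isSuffix ha haw) (hf.length_le_of_isSuffix hb hbw))
    subst hab
    rw [ih hf.of_append_left (List.append_cancel_right (hw.symm.trans hw') ▸ hgs)]

end Nyldon

theorem stmt_2_general {A : Type*} [LinearOrder A]
    (w : List A) :
    ∃! fs : List (List A), IsNyldonFactorization fs w := by
  obtain ⟨fs, hfs⟩ := exists_isNyldonFactorization w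
  exact ⟨fs, hfs, fun gs hgs => hgs.unique hfs⟩

/-- Every nonempty word has exactly one Nyldon factorization. -/
theorem stmt_2 {A : Type*} [LinearOrder A] [Fintype A] (hA : 2 ≤ Fintype.card A)
    (w : List A) (hw : w ≠ []) :
    ∃! fs : List (List A), IsNyldonFactorization fs w :=
  stmt_2_general w
end

section
/- Let (G, ≺) be a Nyldon-like set over A. Then: (a) if (u_1, u_2, …, u_k) is a G-factorization of a nonempty word x, then u_k is the longest suffix of x lying in G (every suffix s of x with s ∈ G satisfies |s| ≤ |u_k|); and (b) if x ∈ G and s is a proper nonempty suffix of x with s ∈ G, then s ≺ x. -/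
/-!
Both parts are proved together by induction on `|x|`.

(a) If a `G`-suffix `s` of `x = u₁ ⋯ uₖ` were longer than `uₖ`, then `s = y uᵢ₊₁ ⋯ uₖ` with `y` a
nonempty suffix of some `uᵢ`, `i < k`. Either `y = uᵢ`, or the last factor of a `G`-factorization
of `y` is a proper suffix of `uᵢ`, hence `≺ uᵢ` by (b) for the shorter word `uᵢ`. In both cases
`s` gets a `G`-factorization into at least two factors, contradicting `s ∈ G`.

(b) Write `x = p s` and let `pₘ` be the last factor of a `G`-factorization of `p`; since `x ∈ G`,
we get `s ≺ pₘ`. If `pₘ s ∈ G`, then `s ≺ pₘ ≺ pₘ s`. Otherwise `pₘ s` is shorter than `x`, so by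
(a) the last factor `q` of its `G`-factorization has `s` as a proper suffix (`q = s` would
factorize `pₘ` nontrivially), and `s ≺ q` by (b) for shorter words. In both cases we find a
`G`-suffix of `x` longer than `s` and `≻ s`, and conclude by a descending induction on `|s|`.
-/

namespace NyldonLike

variable {A : Type*} (G : NyldonLike A)

def SuffixLt (x : List A) : Prop :=
  ∀ s, G.Mem s → s <:+ x → s ≠ x → G.lt s x

def LastFactorLongest (x : List A) : Prop :=
  ∀ fs u, G.IsFactorization (fs ++ [u]) x → ∀ s, s <:+ x → G.Mem s → s.length ≤ u.length

variable {G} {u v w : List A} {fs gs : List (List A)}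

theorem lt_of_not_le (hu : G.Mem u) (hv : G.Mem v) (h : ¬ G.le u v) : G.lt v u := by
  rcases G.lt_total u v hu hv with huv | rfl | hvu
  · exact absurd (Or.inr huv) h
  · exact absurd (Or.inl rfl) h
  · exact hvu

theorem lt_of_lt_of_le (hu : G.Mem u) (hv : G.Mem v) (hw : G.Mem w) (huv : G.lt u v)
    (hvw : G.le v w) : G.lt u w := by
  rcases hvw with rfl | hvw
  · exact huv
  · exact G.lt_trans u v w hu hv hw huv hvw

theorem le_trans (hu : G.Mem u) (hv : G.Mem v) (hw : G.Mem w) (huv : G.le u v)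
    (hvw : G.le v w) : G.le u w := by
  rcases huv with rfl | huv
  · exact hvw
  · exact Or.inr (lt_of_lt_of_le hu hv hw huv hvw)

theorem not_le_of_lt (hu : G.Mem u) (hv : G.Mem v) (h : G.lt u v) : ¬ G.le v u :=
  fun hvu => G.lt_irrefl u hu (lt_of_lt_of_le hu hv hu h hvu)

theorem isFactorization_singleton (hw : G.Mem w) : G.IsFactorization [w] w :=
  ⟨by simpa using hw, List.isChain_singleton w, by simp⟩

theorem IsFactorization.append (h₁ : G.IsFactorization fs v) (h₂ : G.IsFactorization gs w)
    (h : ∀ a ∈ fs.getLast?, ∀ b ∈ gs.head?, G.le a b) :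
    G.IsFactorization (fs ++ gs) (v ++ w) :=
  ⟨fun f hf => (List.mem_append.1 hf).elim (h₁.1 f) (h₂.1 f),
    List.isChain_append.2 ⟨h₁.2.1, h₂.2.1, h⟩, by rw [List.flatten_append, h₁.2.2, h₂.2.2]⟩

theorem IsFactorization.left (h : G.IsFactorization (fs ++ gs) w) :
    G.IsFactorization fs fs.flatten :=
  ⟨fun f hf => h.1 f (List.mem_append_left gs hf), (List.isChain_append.1 h.2.1).1, rfl⟩

theorem IsFactorization.right (h : G.IsFactorization (fs ++ gs) w) :
    G.IsFactorization gs gs.flatten :=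
  ⟨fun f hf => h.1 f (List.mem_append_right fs hf), (List.isChain_append.1 h.2.1).2.1, rfl⟩

theorem IsFactorization.notMem (h : G.IsFactorization fs w) (hfs : 2 ≤ fs.length) :
    ¬ G.Mem w := by
  have hw : 2 ≤ w.length := h.2.2 ▸ hfs.trans
    (length_le_length_flatten_of_ne_nil fun f hf => G.mem_ne_nil f (h.1 f hf))
  rw [G.mem_iff w hw, not_not]
  exact ⟨fs, hfs, h⟩

theorem IsFactorization.eq_singleton (h : G.IsFactorization fs w) (hw : G.Mem w) : fs = [w] := by
  match fs, h with
  | [], h => exact absurd h.2.2.symm (G.mem_ne_nil w hw)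
  | [f], h => simpa using h.2.2
  | _ :: _ :: _, h => exact absurd hw (h.notMem (by simp))

theorem exists_isFactorization (hw : w ≠ []) : ∃ fs u, G.IsFactorization (fs ++ [u]) w := by
  by_cases hG : G.Mem w
  · exact ⟨[], w, isFactorization_singleton hG⟩
  have h2 : 2 ≤ w.length := by
    match w with
    | [] => exact absurd rfl hw
    | [a] => exact absurd (G.singleton_mem a) hG
    | _ :: _ :: _ => simp
  obtain ⟨fs, hfs, hfac⟩ := not_not.1 ((G.mem_iff w h2).not.1 hG)
  obtain ⟨fs, u, rfl⟩ := (List.eq_nil_or_concat fs).resolve_left (by rintro rfl; simp at hfs)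
  rw [List.concat_eq_append] at hfac
  exact ⟨fs, u, hfac⟩

theorem exists_isFactorization_of_suffix {f y : List A} (hf : G.Mem f) (hfs : G.SuffixLt f)
    (hyf : y <:+ f) (hy : y ≠ []) :
    ∃ ys, ys ≠ [] ∧ G.IsFactorization ys y ∧ ∀ a ∈ ys.getLast?, G.le a f := by
  by_cases hyf' : y = f
  · subst hyf'
    refine ⟨[y], by simp, isFactorization_singleton hf, fun a ha => ?_⟩
    obtain rfl : y = a := by simpa using ha
    exact Or.inl rfl
  obtain ⟨ys, y', hfac⟩ := exists_isFactorization (G := G) hy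
  have hy'y : y' <:+ y := by
    rw [← hfac.2.2, List.flatten_append, List.flatten_singleton]
    exact List.suffix_append _ _
  have hy'f : y' ≠ f := by
    rintro rfl
    exact hyf' (hyf.eq_of_length (le_antisymm hyf.length_le hy'y.length_le))
  refine ⟨ys ++ [y'], by simp, hfac, fun a ha => ?_⟩
  obtain rfl : y' = a := by simpa using ha
  exact Or.inr (hfs y' (hfac.1 y' (by simp)) (hy'y.trans hyf) hy'f)

theorem IsFactorization.length_le_of_suffix {x s : List A} (hb : ∀ f ∈ fs, G.SuffixLt f)
    (h : G.IsFactorization (fs ++ [u]) x) (hsx : s <:+ x) (hs : G.Mem s) :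
    s.length ≤ u.length := by
  induction fs generalizing x with
  | nil => simpa [← h.2.2] using hsx.length_le
  | cons f fs ih =>
    have hrest : G.IsFactorization (fs ++ [u]) (fs ++ [u]).flatten := h.right (fs := [f])
    have hsr : s <:+ (fs ++ [u]).flatten → s.length ≤ u.length :=
      ih (fun g hg => hb g (List.mem_cons_of_mem f hg)) hrest
    obtain ⟨t, hts⟩ := hsx
    rw [← h.2.2, List.cons_append, List.flatten_cons] at hts
    rcases List.append_eq_append_iff.1 hts with ⟨y, hfy, rfl⟩ | ⟨r, -, hr⟩
    swap
    · exact hsr ⟨r, hr.symm⟩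
    rcases eq_or_ne y [] with rfl | hy
    · exact hsr (List.suffix_refl _)
    have hf : G.Mem f := h.1 f (by simp)
    obtain ⟨ys, hys, hyfac, hyf⟩ :=
      exists_isFactorization_of_suffix hf (hb f (by simp)) ⟨t, hfy.symm⟩ hy
    have hfr : ∀ b ∈ (fs ++ [u]).head?, G.le f b := (List.isChain_cons.1 h.2.1).1
    have hsfac := hyfac.append hrest fun a ha b hb' =>
      le_trans (hyfac.1 a (List.mem_of_getLast? ha)) hf (hrest.1 b (List.mem_of_head? hb'))
        (hyf a ha) (hfr b hb')
    refine absurd hs (hsfac.notMem ?_)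
    have := List.length_pos_iff.2 hys
    simp only [List.length_append, List.length_cons]
    omega

theorem exists_longer_suffix {p s : List A} (hx : G.Mem (p ++ s)) (hs : G.Mem s) (hp : p ≠ [])
    (ha : ∀ w : List A, w.length < (p ++ s).length → G.LastFactorLongest w)
    (hb : ∀ y : List A, y.length < (p ++ s).length → G.Mem y → G.SuffixLt y) :
    ∃ q, G.Mem q ∧ q <:+ p ++ s ∧ s.length < q.length ∧ G.lt s q := by
  obtain ⟨ps, pm, hpfac⟩ := exists_isFactorization (G := G) hp
  have hpm : G.Mem pm := hpfac.1 pm (by simp)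
  have hspm : G.lt s pm := lt_of_not_le hpm hs fun hle =>
    (hpfac.append (isFactorization_singleton hs) (by simpa using hle)).notMem (by simp) hx
  have hwx : pm ++ s <:+ p ++ s := by
    rw [← hpfac.2.2, List.flatten_append, List.flatten_singleton, List.append_assoc]
    exact List.suffix_append _ _
  have hslen : s.length < (pm ++ s).length := by
    simpa using List.length_pos_iff.2 (G.mem_ne_nil pm hpm)
  by_cases hw : G.Mem (pm ++ s)
  · exact ⟨pm ++ s, hw, hwx, hslen, G.lt_trans s pm _ hs hpm hw hspm (G.append_lt pm s hpm hs hw)⟩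
  obtain ⟨qs, q, hqfac⟩ :=
    exists_isFactorization (G := G) (w := pm ++ s) (by simp [G.mem_ne_nil s hs])
  have hq : G.Mem q := hqfac.1 q (by simp)
  have hqw : q <:+ pm ++ s := by
    rw [← hqfac.2.2, List.flatten_append, List.flatten_singleton]
    exact List.suffix_append _ _
  have hwlen : (pm ++ s).length < (p ++ s).length :=
    lt_of_le_of_ne hwx.length_le fun h => hw (hwx.eq_of_length h ▸ hx)
  have hsq : s <:+ q := List.suffix_of_suffix_length_le (List.suffix_append pm s) hqw
    (ha _ hwlen qs q hqfac s (List.suffix_append pm s) hs)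
  have hqs : q ≠ s := by
    rintro rfl
    have hqs : qs.flatten = pm := by simpa using hqfac.2.2
    have hqs : qs = [pm] := hqs ▸ hqfac.left.eq_singleton (hqs ▸ hpm)
    subst hqs
    exact not_le_of_lt hs hpm hspm (List.isChain_pair.1 hqfac.2.1)
  have hqlen : q.length < (p ++ s).length := lt_of_le_of_lt hqw.length_le hwlen
  exact ⟨q, hq, hqw.trans hwx,
    lt_of_le_of_ne hsq.length_le fun h => hqs (hsq.eq_of_length h).symm,
    hb q hqlen hq s hs hsq hqs.symm⟩

theorem suffixLt_of_forall_length_lt {x : List A} (hx : G.Mem x)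
    (ha : ∀ w : List A, w.length < x.length → G.LastFactorLongest w)
    (hb : ∀ y : List A, y.length < x.length → G.Mem y → G.SuffixLt y) : G.SuffixLt x := by
  intro s hs hsx hne
  induction hn : x.length - s.length using Nat.strong_induction_on generalizing s with
  | _ n ih =>
  obtain ⟨p, rfl⟩ := hsx
  obtain ⟨q, hq, hqx, hsq, hlt⟩ :=
    exists_longer_suffix hx hs (by rintro rfl; exact hne rfl) ha hb
  rcases eq_or_ne q (p ++ s) with rfl | hqx'
  · exact hlt
  have hlen : (p ++ s).length - q.length < n := by
    have := hqx.length_le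
    omega
  exact G.lt_trans s q _ hs hq hx hlt (ih _ hlen q hq hqx hqx' rfl)

variable (G) in
theorem lastFactorLongest_and_suffixLt (x : List A) :
    G.LastFactorLongest x ∧ (G.Mem x → G.SuffixLt x) := by
  have ih (y : List A) (_ : y.length < x.length) :
      G.LastFactorLongest y ∧ (G.Mem y → G.SuffixLt y) :=
    lastFactorLongest_and_suffixLt y
  refine ⟨fun fs u hfac s hsx hs => hfac.length_le_of_suffix (fun f hf => ?_) hsx hs,
    fun hx => suffixLt_of_forall_length_lt hx (fun w hw => (ih w hw).1)
      fun y hy => (ih y hy).2⟩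
  have hflen : f.length < x.length := by
    have hf_le := (List.infix_of_mem_flatten hf).length_le
    have hu := List.length_pos_iff.2 (G.mem_ne_nil u (hfac.1 u (by simp)))
    rw [← hfac.2.2, List.flatten_append, List.length_append]
    simp only [List.flatten_singleton]
    omega
  exact (ih f hflen).2 (hfac.1 f (List.mem_append_left _ hf))
termination_by x.length

end NyldonLike

theorem stmt_8_general {A : Type*}
    (G : NyldonLike A) :
    (∀ (x : List A) (fs : List (List A)) (hfs : fs ≠ []), x ≠ [] →
      G.IsFactorization fs x →
        fs.getLast hfs <:+ x ∧ G.Mem (fs.getLast hfs) ∧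
          ∀ s : List A, s <:+ x → G.Mem s → s.length ≤ (fs.getLast hfs).length) ∧
    (∀ x s : List A, G.Mem x → G.Mem s → s <:+ x → s ≠ x → G.lt s x) := by
  refine ⟨fun x fs hfs _ hfac => ?_, fun x s hx => (G.lastFactorLongest_and_suffixLt x).2 hx s⟩
  rw [← List.dropLast_concat_getLast hfs] at hfac
  have hsuffix : fs.getLast hfs <:+ x := by
    rw [← hfac.2.2, List.flatten_append, List.flatten_singleton]
    exact List.suffix_append _ _
  exact ⟨hsuffix, hfac.1 _ (by simp), (G.lastFactorLongest_and_suffixLt x).1 _ _ hfac⟩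

/-- For any Nyldon-like set `(G, ≺)`: (a) the last factor of a
`G`-factorization of a nonempty word `x` is the longest suffix of `x` lying in `G`;
(b) any proper nonempty suffix `s ∈ G` of a word `x ∈ G` satisfies `s ≺ x`. -/
theorem stmt_8 {A : Type*} [LinearOrder A] [Fintype A] (hA : 2 ≤ Fintype.card A)
    (G : NyldonLike A) :
    (∀ (x : List A) (fs : List (List A)) (hfs : fs ≠ []), x ≠ [] →
      G.IsFactorization fs x →
        fs.getLast hfs <:+ x ∧ G.Mem (fs.getLast hfs) ∧
          ∀ s : List A, s <:+ x → G.Mem s → s.length ≤ (fs.getLast hfs).length) ∧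
    (∀ x s : List A, G.Mem x → G.Mem s → s <:+ x → s ≠ x → G.lt s x) :=
  stmt_8_general G
end
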